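/- Assume k(1) = 0, i.e. λ + θ + λΦ′(1) = 0 (the case ĉ = 1 of the paper); then ζ(c) < 0 for all c ∈ [0,1), and both x̄₀(c) → −∞ and γ(c) → −∞ as c ↑ 1. -/

import Mathlib

open MeasureTheory Real Set Filter

/-- The (positive multiple of the) strictly increasing fundamental solution `ψ_λ` of the
Ornstein–Uhlenbeck equation `(1/2)σ² f'' + θ(μ - x) f' = λ f`, written as the integral
`ψ(x) = ∫₀^∞ t^(λ/θ - 1) exp(-t²/2 + a t (x - μ)) dt` with `a = √(2θ)/σ`. -/
noncomputable def OUpsi (lam th mu sig : ℝ) (x : ℝ) : ℝ :=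
  ∫ t in Set.Ioi (0:ℝ),
    t ^ (lam / th - 1) * Real.exp (-t ^ 2 / 2 + Real.sqrt (2 * th) / sig * t * (x - mu))

/-- `k(c) = λ + θ + λ Φ'(c)`. -/
noncomputable def kfun (lam th : ℝ) (Phi : ℝ → ℝ) (c : ℝ) : ℝ :=
  lam + th + lam * deriv Phi c

/-- `ζ(c) = (λ+θ)(1-c) - λΦ(c)`. -/
noncomputable def zetafun (lam th : ℝ) (Phi : ℝ → ℝ) (c : ℝ) : ℝ :=
  (lam + th) * (1 - c) - lam * Phi c

/-- `x̄₀(c) = θμΦ(c)/ζ(c)`. -/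
noncomputable def xbar0fun (lam th mu : ℝ) (Phi : ℝ → ℝ) (c : ℝ) : ℝ :=
  th * mu * Phi c / zetafun lam th Phi c

open Topology

/-!
Strict convexity keeps `Φ` above its tangent at `1`, whose slope `Φ'(1) = -(λ+θ)/λ` is forced by
`k(1) = 0`; hence `λΦ(c) > (λ+θ)(1-c)`, i.e. `ζ(c) < 0`. Both `ζ` and `Φ` vanish at `1`, but
`ζ'(1) = -k(1) = 0` while `Φ'(1) ≠ 0`, so `ζ/Φ → 0⁻` and `x̄₀ = θμ (ζ/Φ)⁻¹ → -∞`.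
Since `ψ > 0` and `ψ' > 0`, the function `ψ(x) - ψ'(x)(x - x̄₀)` is positive at `x̄₀` and
nonpositive at `M` as soon as `x̄₀ ≤ M - ψ(M)/ψ'(M)`; its unique zero `γ` then lies below `M`.
-/

noncomputable def gaussMoment (p b y : ℝ) : ℝ :=
  ∫ t in Ioi (0:ℝ), t ^ p * exp (-t ^ 2 / 2 + b * t * y)

section GaussMoment

variable {p : ℝ}

lemma integrableOn_gaussMoment (hp : -1 < p) (b y : ℝ) :
    IntegrableOn (fun t : ℝ => t ^ p * exp (-t ^ 2 / 2 + b * t * y)) (Ioi 0) := by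
  have hdom : IntegrableOn (fun t : ℝ => exp ((b * y) ^ 2) * (t ^ p * exp (-(4:ℝ)⁻¹ * t ^ 2)))
      (Ioi 0) :=
    (integrableOn_rpow_mul_exp_neg_mul_sq (by norm_num) hp).const_mul _
  have hmeas : ContinuousOn (fun t : ℝ => t ^ p * exp (-t ^ 2 / 2 + b * t * y)) (Ioi 0) :=
    (continuousOn_id.rpow_const fun t ht => Or.inl (ne_of_gt ht)).mul (by fun_prop)
  refine hdom.mono' (hmeas.aestronglyMeasurable measurableSet_Ioi) ?_
  filter_upwards [ae_restrict_mem measurableSet_Ioi] with t (ht : 0 < t)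
  -- completing the square: `-t²/2 + bty ≤ (by)² - t²/4`
  have hexp : exp (-t ^ 2 / 2 + b * t * y) ≤ exp ((b * y) ^ 2) * exp (-(4:ℝ)⁻¹ * t ^ 2) := by
    rw [← exp_add, exp_le_exp]
    nlinarith [sq_nonneg (t / 2 - b * y)]
  rw [norm_of_nonneg (by positivity), mul_left_comm]
  exact mul_le_mul_of_nonneg_left hexp (by positivity)

lemma gaussMoment_pos (hp : -1 < p) (b y : ℝ) : 0 < gaussMoment p b y := by
  have hpos : ∀ t ∈ Ioi (0:ℝ), 0 < t ^ p * exp (-t ^ 2 / 2 + b * t * y) := fun t ht =>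
    mul_pos (rpow_pos_of_pos ht p) (exp_pos _)
  refine (setIntegral_pos_iff_support_of_nonneg_ae ?_ (integrableOn_gaussMoment hp b y)).2 ?_
  · filter_upwards [ae_restrict_mem measurableSet_Ioi] with t ht using (hpos t ht).le
  · have hsub : Ioi (0:ℝ) ⊆ Function.support _ ∩ Ioi 0 := fun t ht => ⟨(hpos t ht).ne', ht⟩
    exact (by simp : (0 : ENNReal) < volume (Ioi (0:ℝ))).trans_le (measure_mono hsub)

lemma hasDerivAt_gaussMoment (hp : -1 < p) (b y₀ : ℝ) :
    HasDerivAt (gaussMoment p b) (b * gaussMoment (p + 1) b y₀) y₀ := by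
  have hp1 : -1 < p + 1 := by linarith
  have hF' : ∀ t ∈ Ioi (0:ℝ), ∀ y, t ^ p * (exp (-t ^ 2 / 2 + b * t * y) * (b * t))
      = b * (t ^ (p + 1) * exp (-t ^ 2 / 2 + b * t * y)) := fun t (ht : 0 < t) y => by
    rw [rpow_add_one ht.ne']; ring
  have hbound : ∀ᵐ t ∂volume.restrict (Ioi 0), ∀ y ∈ Metric.ball y₀ 1,
      ‖t ^ p * (exp (-t ^ 2 / 2 + b * t * y) * (b * t))‖
        ≤ |b| * (t ^ (p + 1) * exp (-t ^ 2 / 2 + |b| * (|y₀| + 1) * t * 1)) := by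
    filter_upwards [ae_restrict_mem measurableSet_Ioi] with t (ht : 0 < t) y hy
    have hby : b * y ≤ |b| * (|y₀| + 1) := by
      have hy' : |y| ≤ |y₀| + 1 := by
        have := abs_sub_abs_le_abs_sub y y₀
        rw [Metric.mem_ball, dist_eq_norm, norm_eq_abs] at hy
        linarith
      calc b * y ≤ |b| * |y| := by rw [← abs_mul]; exact le_abs_self _
        _ ≤ |b| * (|y₀| + 1) := mul_le_mul_of_nonneg_left hy' (abs_nonneg b)
    have hexp : exp (-t ^ 2 / 2 + b * t * y) ≤ exp (-t ^ 2 / 2 + |b| * (|y₀| + 1) * t * 1) := by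
      rw [exp_le_exp]; nlinarith
    rw [hF' t ht, norm_mul, norm_eq_abs, norm_of_nonneg (by positivity)]
    gcongr
  obtain ⟨-, hderiv⟩ := hasDerivAt_integral_of_dominated_loc_of_deriv_le
    (μ := volume.restrict (Ioi 0)) (x₀ := y₀)
    (F := fun y t => t ^ p * exp (-t ^ 2 / 2 + b * t * y))
    (F' := fun y t => t ^ p * (exp (-t ^ 2 / 2 + b * t * y) * (b * t)))
    (bound := fun t => |b| * (t ^ (p + 1) * exp (-t ^ 2 / 2 + |b| * (|y₀| + 1) * t * 1)))
    (Metric.ball_mem_nhds y₀ one_pos)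
    (Eventually.of_forall fun y => (integrableOn_gaussMoment hp b y).aestronglyMeasurable)
    (integrableOn_gaussMoment hp b y₀)
    (((integrableOn_gaussMoment hp1 b y₀).const_mul b).aestronglyMeasurable.congr
      (by filter_upwards [ae_restrict_mem measurableSet_Ioi] with t ht using (hF' t ht y₀).symm))
    hbound
    ((integrableOn_gaussMoment hp1 (|b| * (|y₀| + 1)) 1).const_mul _)
    (by
      filter_upwards [ae_restrict_mem measurableSet_Ioi] with t ht y _
      have hlin : HasDerivAt (fun y : ℝ => -t ^ 2 / 2 + b * t * y) (b * t) y := by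
        simpa using ((hasDerivAt_id y).const_mul (b * t)).const_add (-t ^ 2 / 2)
      exact hlin.exp.const_mul (t ^ p))
  have hint : ∫ t in Ioi (0:ℝ), t ^ p * (exp (-t ^ 2 / 2 + b * t * y₀) * (b * t))
      = b * gaussMoment (p + 1) b y₀ := by
    rw [gaussMoment, ← integral_const_mul]
    exact setIntegral_congr_fun measurableSet_Ioi fun t ht => hF' t ht y₀
  rwa [hint] at hderiv

lemma differentiable_gaussMoment (hp : -1 < p) (b : ℝ) : Differentiable ℝ (gaussMoment p b) :=
  fun y => (hasDerivAt_gaussMoment hp b y).differentiableAt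

end GaussMoment

section OUpsi

variable {lam th mu sig : ℝ}

lemma hasDerivAt_OUpsi (h : 0 < lam / th) (x : ℝ) :
    HasDerivAt (OUpsi lam th mu sig)
      (√(2 * th) / sig * gaussMoment (lam / th) (√(2 * th) / sig) (x - mu)) x := by
  -- `OUpsi lam th mu sig x` unfolds to `gaussMoment (lam / th - 1) (√(2 * th) / sig) (x - mu)`
  have hcomp := (hasDerivAt_gaussMoment (by linarith : -1 < lam / th - 1) (√(2 * th) / sig)
    (x - mu)).comp x ((hasDerivAt_id x).sub_const mu)
  rw [sub_add_cancel, mul_one] at hcomp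
  exact hcomp

lemma OUpsi_pos (h : 0 < lam / th) (x : ℝ) : 0 < OUpsi lam th mu sig x :=
  gaussMoment_pos (by linarith) _ _

lemma deriv_OUpsi (h : 0 < lam / th) :
    deriv (OUpsi lam th mu sig)
      = fun x => √(2 * th) / sig * gaussMoment (lam / th) (√(2 * th) / sig) (x - mu) :=
  funext fun x => (hasDerivAt_OUpsi h x).deriv

lemma differentiable_OUpsi (h : 0 < lam / th) : Differentiable ℝ (OUpsi lam th mu sig) :=
  fun x => (hasDerivAt_OUpsi h x).differentiableAt

lemma continuous_deriv_OUpsi (h : 0 < lam / th) : Continuous (deriv (OUpsi lam th mu sig)) := by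
  rw [deriv_OUpsi h]
  exact continuous_const.mul
    ((differentiable_gaussMoment (by linarith) _).continuous.comp (continuous_sub_right mu))

lemma deriv_OUpsi_pos (h : 0 < lam / th) (hth : 0 < th) (hsig : 0 < sig) (x : ℝ) :
    0 < deriv (OUpsi lam th mu sig) x := by
  rw [deriv_OUpsi h]
  exact mul_pos (div_pos (by positivity) hsig) (gaussMoment_pos (by linarith) _ _)

end OUpsi

lemma exists_tangent_root_mem_Icc {ψ : ℝ → ℝ} (hψ : Differentiable ℝ ψ)
    (hψ' : Continuous (deriv ψ)) (hnonneg : ∀ x, 0 ≤ ψ x) {x₀ M : ℝ} (hM : 0 < deriv ψ M)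
    (hx₀ : x₀ ≤ M - ψ M / deriv ψ M) :
    ∃ y ∈ Icc x₀ M, ψ y = deriv ψ y * (y - x₀) := by
  have hx₀M : x₀ ≤ M := hx₀.trans (sub_le_self _ (div_nonneg (hnonneg M) hM.le))
  have hFM : ψ M - deriv ψ M * (M - x₀) ≤ 0 := by
    have := (div_le_iff₀' hM).1 (by linarith : ψ M / deriv ψ M ≤ M - x₀)
    linarith
  have hF : ContinuousOn (fun x => ψ x - deriv ψ x * (x - x₀)) (Icc x₀ M) :=
    (hψ.continuous.sub (hψ'.mul (continuous_sub_right x₀))).continuousOn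
  obtain ⟨y, hy, hFy⟩ := intermediate_value_Icc' hx₀M hF ⟨hFM, by simpa using hnonneg x₀⟩
  exact ⟨y, hy, sub_eq_zero.1 hFy⟩

lemma tendsto_atBot_of_unique_tangent_root {ι : Type*} {l : Filter ι} {ψ : ℝ → ℝ}
    (hψ : Differentiable ℝ ψ) (hψ' : Continuous (deriv ψ)) (hnonneg : ∀ x, 0 ≤ ψ x)
    (hderiv : ∀ x, 0 < deriv ψ x) {x₀ γ : ι → ℝ} (hx₀ : Tendsto x₀ l atBot)
    (hγ : ∀ᶠ i in l, ∀ y, ψ y = deriv ψ y * (y - x₀ i) → y = γ i) :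
    Tendsto γ l atBot := by
  refine tendsto_atBot.2 fun M => ?_
  filter_upwards [hx₀.eventually_le_atBot (M - ψ M / deriv ψ M), hγ] with i hi hγi
  obtain ⟨y, hy, hroot⟩ := exists_tangent_root_mem_Icc hψ hψ' hnonneg (hderiv M) hi
  exact hγi y hroot ▸ hy.2

lemma tendsto_div_nhdsNE_zero_of_hasDerivAt {f g : ℝ → ℝ} {a g' : ℝ} (hf : HasDerivAt f 0 a)
    (hg : HasDerivAt g g' a) (hfa : f a = 0) (hga : g a = 0) (hg' : g' ≠ 0) :
    Tendsto (fun x => f x / g x) (𝓝[≠] a) (𝓝 0) := by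
  have h := (hasDerivAt_iff_tendsto_slope.1 hf).div (hasDerivAt_iff_tendsto_slope.1 hg) hg'
  rw [zero_div] at h
  refine h.congr' ?_
  filter_upwards [self_mem_nhdsWithin] with x (hx : x ≠ a)
  rw [Pi.div_apply, slope_def_field, slope_def_field, hfa, hga, sub_zero, sub_zero]
  exact div_div_div_cancel_right₀ (sub_ne_zero.2 hx) _ _

section Zeta

variable {lam th : ℝ} {Phi : ℝ → ℝ}

lemma hasDerivAt_zetafun {c : ℝ} (hd : DifferentiableAt ℝ Phi c) :
    HasDerivAt (zetafun lam th Phi) (-kfun lam th Phi c) c := by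
  have h : HasDerivAt (fun x => (lam + th) * (1 - x) - lam * Phi x)
      ((lam + th) * -1 - lam * deriv Phi c) c :=
    (((hasDerivAt_id' c).const_sub 1).const_mul (lam + th)).sub (hd.hasDerivAt.const_mul lam)
  rwa [show (lam + th) * -1 - lam * deriv Phi c = -kfun lam th Phi c by rw [kfun]; ring] at h

lemma mul_one_sub_lt_mul_of_kfun_eq_zero {S : Set ℝ} {c : ℝ} (hlam : 0 < lam)
    (hconv : StrictConvexOn ℝ S Phi) (hc : c ∈ S) (h1 : 1 ∈ S) (hc1 : c < 1)
    (hd : DifferentiableAt ℝ Phi 1) (hPhi1 : Phi 1 = 0) (hk1 : kfun lam th Phi 1 = 0) :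
    (lam + th) * (1 - c) < lam * Phi c := by
  have hslope := hconv.slope_lt_deriv hc h1 hc1 hd
  rw [slope_def_field, hPhi1, div_lt_iff₀ (sub_pos.2 hc1)] at hslope
  unfold kfun at hk1
  nlinarith [mul_lt_mul_of_pos_left hslope hlam]

lemma zetafun_neg_of_kfun_eq_zero {S : Set ℝ} {c : ℝ} (hlam : 0 < lam)
    (hconv : StrictConvexOn ℝ S Phi) (hc : c ∈ S) (h1 : 1 ∈ S) (hc1 : c < 1)
    (hd : DifferentiableAt ℝ Phi 1) (hPhi1 : Phi 1 = 0) (hk1 : kfun lam th Phi 1 = 0) :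
    zetafun lam th Phi c < 0 :=
  sub_neg.2 (mul_one_sub_lt_mul_of_kfun_eq_zero hlam hconv hc h1 hc1 hd hPhi1 hk1)

lemma tendsto_xbar0fun_atBot {mu : ℝ} (hlam : 0 < lam) (hth : 0 < th) (hmu : 0 < mu)
    (hconv : StrictConvexOn ℝ univ Phi) (hd : DifferentiableAt ℝ Phi 1) (hPhi1 : Phi 1 = 0)
    (hk1 : kfun lam th Phi 1 = 0) :
    Tendsto (xbar0fun lam th mu Phi) (𝓝[<] 1) atBot := by
  have hd1 : deriv Phi 1 ≠ 0 := by
    intro h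
    rw [kfun, h] at hk1
    linarith
  have hratio : Tendsto (fun c => zetafun lam th Phi c / Phi c) (𝓝[<] 1) (𝓝[<] 0) := by
    refine tendsto_nhdsWithin_iff.2 ⟨?_, ?_⟩
    · have hζ' : HasDerivAt (zetafun lam th Phi) 0 1 := by
        simpa [hk1] using hasDerivAt_zetafun (lam := lam) (th := th) hd
      exact (tendsto_div_nhdsNE_zero_of_hasDerivAt hζ' hd.hasDerivAt (by simp [zetafun, hPhi1])
        hPhi1 hd1).mono_left (nhdsWithin_mono _ fun c (hc : c < 1) => hc.ne)
    · filter_upwards [self_mem_nhdsWithin] with c (hc : c < 1)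
      have h := mul_one_sub_lt_mul_of_kfun_eq_zero hlam hconv (mem_univ c) (mem_univ 1) hc hd
        hPhi1 hk1
      have hPhic : 0 < Phi c := by nlinarith
      exact div_neg_of_neg_of_pos (sub_neg.2 h) hPhic
  refine (hratio.inv_tendsto_nhdsLT_zero.const_mul_atBot (mul_pos hth hmu)).congr fun c => ?_
  rw [xbar0fun, Pi.inv_apply, inv_div, mul_div_assoc]

end Zeta

theorem statement18_general (lam th mu sig : ℝ)
    (hlam : 0 < lam) (hth : 0 < th) (hmu : 0 < mu) (hsig : 0 < sig)
    (Phi : ℝ → ℝ) (hPhiC2 : ContDiff ℝ 2 Phi)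
    (hPhiconv : StrictConvexOn ℝ Set.univ Phi)
    (hPhi1 : Phi 1 = 0)
    (hk1 : lam + th + lam * deriv Phi 1 = 0)
    (gamma : ℝ → ℝ)
    (hgamma : ∀ c ∈ Set.Ico (0:ℝ) 1,
      OUpsi lam th mu sig (gamma c)
        = deriv (OUpsi lam th mu sig) (gamma c) * (gamma c - xbar0fun lam th mu Phi c) ∧
      xbar0fun lam th mu Phi c < gamma c ∧
      ∀ y : ℝ, OUpsi lam th mu sig y
        = deriv (OUpsi lam th mu sig) y * (y - xbar0fun lam th mu Phi c) → y = gamma c)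
    :
    (∀ c ∈ Set.Ico (0:ℝ) 1, zetafun lam th Phi c < 0) ∧
    Filter.Tendsto (xbar0fun lam th mu Phi) (nhdsWithin 1 (Set.Iio 1)) Filter.atBot ∧
    Filter.Tendsto gamma (nhdsWithin 1 (Set.Iio 1)) Filter.atBot := by
  have hd : DifferentiableAt ℝ Phi 1 := (hPhiC2.differentiable two_ne_zero).differentiableAt
  have hxbar0 := tendsto_xbar0fun_atBot hlam hth hmu hPhiconv hd hPhi1 hk1
  have hlamth : 0 < lam / th := div_pos hlam hth
  refine ⟨fun c hc => zetafun_neg_of_kfun_eq_zero hlam hPhiconv (mem_univ c) (mem_univ 1) hc.2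
    hd hPhi1 hk1, hxbar0, ?_⟩
  refine tendsto_atBot_of_unique_tangent_root (ψ := OUpsi lam th mu sig)
    (differentiable_OUpsi hlamth) (continuous_deriv_OUpsi hlamth) (fun x => (OUpsi_pos hlamth x).le)
    (deriv_OUpsi_pos hlamth hth hsig) hxbar0 ?_
  filter_upwards [Ico_mem_nhdsLT (zero_lt_one' ℝ)] with c hc using (hgamma c hc).2.2

/-- the case `ĉ = 1`: assume `k(1) = 0`, i.e. `λ + θ + λΦ'(1) = 0`.
Then `ζ(c) < 0` for every `c ∈ [0,1)`, and both `x̄₀(c) → -∞` and `γ(c) → -∞` as `c ↑ 1`,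
where `γ(c)` denotes the unique real solution of `ψ(x) = ψ'(x)(x - x̄₀(c))`, lying in
`(x̄₀(c), ∞)`. -/
theorem statement18 (lam th mu sig : ℝ)
    (hlam : 0 < lam) (hth : 0 < th) (hmu : 0 < mu) (hsig : 0 < sig)
    (Phi : ℝ → ℝ) (hPhiC2 : ContDiff ℝ 2 Phi)
    (hPhiconv : StrictConvexOn ℝ Set.univ Phi)
    (hPhi' : ∀ c ∈ Set.Icc (0:ℝ) 1, deriv Phi c < 0) (hPhi1 : Phi 1 = 0)
    (hk1 : lam + th + lam * deriv Phi 1 = 0)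
    (gamma : ℝ → ℝ)
    (hgamma : ∀ c ∈ Set.Ico (0:ℝ) 1,
      OUpsi lam th mu sig (gamma c)
        = deriv (OUpsi lam th mu sig) (gamma c) * (gamma c - xbar0fun lam th mu Phi c) ∧
      xbar0fun lam th mu Phi c < gamma c ∧
      ∀ y : ℝ, OUpsi lam th mu sig y
        = deriv (OUpsi lam th mu sig) y * (y - xbar0fun lam th mu Phi c) → y = gamma c)
    :
    (∀ c ∈ Set.Ico (0:ℝ) 1, zetafun lam th Phi c < 0) ∧
    Filter.Tendsto (xbar0fun lam th mu Phi) (nhdsWithin 1 (Set.Iio 1)) Filter.atBot ∧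
    Filter.Tendsto gamma (nhdsWithin 1 (Set.Iio 1)) Filter.atBot :=
  statement18_general lam th mu sig hlam hth hmu hsig Phi hPhiC2 hPhiconv hPhi1 hk1 gamma hgamma
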